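/- Let H be a path graph on n + 1 vertices (n ≥ 1 edges) and G = L(H), so G is a path on n vertices. Then the clique complex Δ(G) is Gorenstein if and only if n ≤ 3, i.e., H is a path of length at most 3. -/

import Mathlib

open Finset SimpleGraph

variable {V : Type*} [DecidableEq V]

/-- An abstract simplicial complex: contains the empty face and is downward closed. -/
def IsComplex (K : Set (Finset V)) : Prop :=
  (∅ : Finset V) ∈ K ∧ ∀ F ∈ K, ∀ G ⊆ F, G ∈ K

/-- `F` is a facet (maximal face) of `K`. -/
def IsFacet (K : Set (Finset V)) (F : Finset V) : Prop :=
  F ∈ K ∧ ∀ G ∈ K, F ⊆ G → F = G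

/-- `K` is pure: all facets have the same cardinality. -/
def IsPure (K : Set (Finset V)) : Prop :=
  ∀ F G, IsFacet K F → IsFacet K G → F.card = G.card

/-- Deletion `K - v`. -/
def del (K : Set (Finset V)) (v : V) : Set (Finset V) := {F ∈ K | v ∉ F}

/-- The link of a vertex. -/
def link (K : Set (Finset V)) (v : V) : Set (Finset V) :=
  {F | v ∉ F ∧ insert v F ∈ K}

/-- A shedding vertex: a vertex such that no face of the link is a facet of the deletion. -/
def IsSheddingVertex (K : Set (Finset V)) (v : V) : Prop :=
  ({v} : Finset V) ∈ K ∧ ∀ F ∈ link K v, ¬ IsFacet (del K v) F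

/-- `K` is a (possibly empty-face-only) simplex: the power set of some finset. -/
def IsSimplexComplex (K : Set (Finset V)) : Prop :=
  ∃ F : Finset V, K = {G | G ⊆ F}

/-- Vertex decomposability. -/
inductive VertexDecomposable : Set (Finset V) → Prop
  | simplex (K : Set (Finset V)) : IsSimplexComplex K → VertexDecomposable K
  | shed (K : Set (Finset V)) (v : V) : IsSheddingVertex K v →
      VertexDecomposable (link K v) → VertexDecomposable (del K v) →
      VertexDecomposable K

/-- The complex generated by a family of finsets. -/
def gen (S : Set (Finset V)) : Set (Finset V) := {G | ∃ F ∈ S, G ⊆ F}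

/-- A shelling order of the facets of `K`. -/
def IsShelling (K : Set (Finset V)) (l : List (Finset V)) : Prop :=
  l.Nodup ∧ (∀ F, IsFacet K F ↔ F ∈ l) ∧
  ∀ i : ℕ, (h : i + 1 < l.length) →
    (∃ F, IsFacet (gen {F | F ∈ l.take (i+1)} ∩ gen {l.get ⟨i+1, h⟩}) F) ∧
    ∀ F, IsFacet (gen {F | F ∈ l.take (i+1)} ∩ gen {l.get ⟨i+1, h⟩}) F →
      F.card + 1 = (l.get ⟨i+1, h⟩).card

def Shellable (K : Set (Finset V)) : Prop := ∃ l, IsShelling K l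

/-- Two facets are adjacent (intersect in codimension one). -/
def FacetAdj (K : Set (Finset V)) (F G : Finset V) : Prop :=
  IsFacet K F ∧ IsFacet K G ∧ (F ∩ G).card + 1 = F.card ∧ (F ∩ G).card + 1 = G.card

/-- A pure complex is strongly connected (connected in codimension 1). -/
def StronglyConnected (K : Set (Finset V)) : Prop :=
  IsPure K ∧ ∀ F G, IsFacet K F → IsFacet K G → Relation.ReflTransGen (FacetAdj K) F G

/-- The clique complex of a graph. -/
def cliqueComplex (G : SimpleGraph V) : Set (Finset V) := {F | G.IsClique (F : Set V)}

/-- The pure `i`-skeleton of `K`: generated by the faces of dimension `i`. -/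
def pureSkeleton (K : Set (Finset V)) (i : ℕ) : Set (Finset V) :=
  {G | ∃ F ∈ K, F.card = i + 1 ∧ G ⊆ F}

/-- The link of a face. -/
def linkFace (K : Set (Finset V)) (F : Finset V) : Set (Finset V) :=
  {G | Disjoint F G ∧ F ∪ G ∈ K}

section Homology
variable (k : Type*) [Field k]

/-- Boundary of a single face, w.r.t. a linear order `lo` on the vertices. -/
noncomputable def bdFace (lo : LinearOrder V) (F : Finset V) : Finset V →₀ k :=
  letI := lo
  ∑ v ∈ F, ((-1 : k) ^ ((F.filter (fun w => w < v)).card)) • Finsupp.single (F.erase v) (1 : k)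

/-- The boundary operator of the augmented oriented chain complex, w.r.t. `lo`. -/
noncomputable def bd (lo : LinearOrder V) (c : Finset V →₀ k) : Finset V →₀ k :=
  c.sum fun F a => a • bdFace k lo F

/-- The reduced homology of `K` in the degree of faces of cardinality `j`
(i.e. dimension `j - 1`) vanishes over `k`. -/
def HomologyVanishes (K : Set (Finset V)) (j : ℕ) : Prop :=
  ∀ lo : LinearOrder V, ∀ c : Finset V →₀ k,
    (∀ F ∈ c.support, F ∈ K ∧ F.card = j) → bd k lo c = 0 →
      ∃ d : Finset V →₀ k, (∀ F ∈ d.support, F ∈ K ∧ F.card = j + 1) ∧ bd k lo d = c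

/-- Reisner's criterion: `K` is Cohen–Macaulay over the field `k`. -/
def IsCMover (K : Set (Finset V)) : Prop :=
  ∀ F ∈ K, ∀ j : ℕ, (∃ G ∈ linkFace K F, j < G.card) →
    HomologyVanishes k (linkFace K F) j

/-- `K` is sequentially Cohen–Macaulay over `k`. -/
def IsSeqCMover (K : Set (Finset V)) : Prop :=
  ∀ i : ℕ, IsCMover k (pureSkeleton K i)

/-- The core of a complex. -/
def core (K : Set (Finset V)) : Set (Finset V) :=
  {F ∈ K | ∀ v ∈ F, ∃ G, IsFacet K G ∧ v ∉ G}

/-- The top reduced homology of `K` is one-dimensional (`≅ k`), where the top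
cardinality of a face of `K` is `m`. -/
def TopHomologyIsK (K : Set (Finset V)) (m : ℕ) : Prop :=
  (∃ G ∈ K, G.card = m) ∧ (∀ G ∈ K, G.card ≤ m) ∧
  ∀ lo : LinearOrder V, ∃ c : Finset V →₀ k, c ≠ 0 ∧
    (∀ F ∈ c.support, F ∈ K ∧ F.card = m) ∧ bd k lo c = 0 ∧
    ∀ c' : Finset V →₀ k, (∀ F ∈ c'.support, F ∈ K ∧ F.card = m) → bd k lo c' = 0 →
      ∃ a : k, c' = a • c

/-- Stanley's criterion: `K` is Gorenstein over `k`. -/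
def IsGorensteinOver (K : Set (Finset V)) : Prop :=
  ∀ F ∈ core K, ∃ m : ℕ,
    TopHomologyIsK k (linkFace (core K) F) m ∧
    ∀ j : ℕ, j < m → HomologyVanishes k (linkFace (core K) F) j

end Homology

/-!
The edges `e₀, …, e_{n-1}` of the path `H` form the path `L(H)`, with `eᵢ ∼ eⱼ` iff `|i - j| = 1`.
For `n ≤ 2` this graph is complete, so `Δ` is a simplex: its core is `{∅}`, whose link is the
`(-1)`-sphere. For `n = 3` the middle edge `e₁` lies in every facet, so the core of `Δ` is the
`0`-sphere `{e₀}, {e₂}`. For `n ≥ 4` both `{e₀}` and `{e₀, e₁}` miss the facet `{e₂, e₃}`, so they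
lie in the core, and the link of `{e₀}` in the core is the single point `e₁`; a point has no
reduced homology at all, so Stanley's criterion fails over every field.
-/

lemma Finsupp.eq_single_add_single_of_support_subset {α M : Type*} [AddCommMonoid M]
    [DecidableEq α] {c : α →₀ M} {x y : α} (hxy : x ≠ y) (h : c.support ⊆ {x, y}) :
    c = single x (c x) + single y (c y) := by
  conv_lhs =>
    rw [← c.sum_single, c.sum_of_support_subset h _ fun _ _ => single_zero _, sum_pair hxy]

section Homology

variable (k : Type*) [Field k]

section Boundary

variable (lo : LinearOrder V)

lemma bdFace_empty : bdFace k lo (∅ : Finset V) = 0 := by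
  simp [bdFace]

lemma bdFace_singleton (a : V) : bdFace k lo {a} = Finsupp.single ∅ 1 := by
  simp [bdFace, filter_singleton]

lemma bd_single (F : Finset V) (a : k) : bd k lo (Finsupp.single F a) = a • bdFace k lo F :=
  Finsupp.sum_single_index (zero_smul k _)

lemma bd_single_singleton (a : V) (x : k) :
    bd k lo (Finsupp.single {a} x) = Finsupp.single ∅ x := by
  rw [bd_single, bdFace_singleton, Finsupp.smul_single_one]

lemma bd_add (c d : Finset V →₀ k) : bd k lo (c + d) = bd k lo c + bd k lo d :=
  Finsupp.sum_add_index' (fun _ => zero_smul k _) fun _ _ _ => add_smul _ _ _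

end Boundary

lemma topHomologyIsK_singleton_empty : TopHomologyIsK k ({∅} : Set (Finset V)) 0 := by
  refine ⟨⟨∅, rfl, card_empty⟩, fun G hG => by simp [Set.mem_singleton_iff.mp hG], fun lo => ?_⟩
  refine ⟨Finsupp.single ∅ 1, by simp, fun F hF => ?_, ?_, fun c hc _ => ⟨c ∅, ?_⟩⟩
  · obtain rfl := Finset.mem_singleton.mp (Finsupp.support_single_subset hF)
    exact ⟨rfl, card_empty⟩
  · rw [bd_single, bdFace_empty, smul_zero]
  · rw [Finsupp.smul_single_one, ← Finsupp.support_subset_singleton]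
    exact fun F hF => Finset.mem_singleton.mpr (card_eq_zero.mp (hc F hF).2)

lemma topHomologyIsK_zeroSphere {a c : V} (hac : a ≠ c) :
    TopHomologyIsK k ({∅, {a}, {c}} : Set (Finset V)) 1 := by
  have hne : ({a} : Finset V) ≠ {c} := by simpa using hac
  refine ⟨⟨{a}, by simp, card_singleton a⟩, ?_, fun lo => ?_⟩
  · rintro G (rfl | rfl | rfl) <;> simp
  set z : Finset V →₀ k := Finsupp.single {a} 1 + Finsupp.single {c} (-1)
  refine ⟨z, fun hz => ?_, fun F hF => ?_, ?_, fun c' hc' hbd => ⟨c' {a}, ?_⟩⟩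
  · simpa [z, Finsupp.single_apply, hne.symm] using DFunLike.congr_fun hz {a}
  · rcases Finset.mem_union.mp (Finsupp.support_add hF) with h | h <;>
      obtain rfl := Finset.mem_singleton.mp (Finsupp.support_single_subset h) <;> simp
  · rw [bd_add, bd_single_singleton, bd_single_singleton, ← Finsupp.single_add, add_neg_cancel,
      Finsupp.single_zero]
  · have hsupp : c'.support ⊆ {{a}, {c}} := fun F hF => by
      obtain ⟨rfl | rfl | rfl, hcard⟩ := hc' F hF <;> simp at hcard ⊢
    have hdec := Finsupp.eq_single_add_single_of_support_subset hne hsupp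
    set p := c' {a}
    have hsum : p + c' {c} = 0 := by
      rw [hdec, bd_add, bd_single_singleton, bd_single_singleton, ← Finsupp.single_add] at hbd
      exact Finsupp.single_eq_zero.mp hbd
    rw [hdec, eq_neg_of_add_eq_zero_right hsum, smul_add, Finsupp.smul_single_one,
      Finsupp.smul_single, smul_eq_mul, mul_neg_one]

lemma not_topHomologyIsK_point (x : V) (m : ℕ) :
    ¬ TopHomologyIsK k ({∅, {x}} : Set (Finset V)) m := by
  rintro ⟨⟨G, hG, rfl⟩, hle, hcycle⟩
  have hG : G = {x} := by
    have := hle {x} (by simp)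
    rcases hG with rfl | rfl <;> simp_all
  obtain ⟨c, hc0, hc, hbd, -⟩ := hcycle (IsWellOrder.linearOrder WellOrderingRel)
  have hsupp : c.support ⊆ {{x}} := fun F hF => by
    obtain ⟨rfl | rfl, hcard⟩ := hc F hF <;> simp [hG] at hcard ⊢
  rw [Finsupp.support_subset_singleton] at hsupp
  rw [hsupp, bd_single_singleton, Finsupp.single_eq_zero] at hbd
  exact hc0 (by rw [hsupp, hbd, Finsupp.single_zero])

lemma homologyVanishes_zero {K : Set (Finset V)} {a : V} (ha : {a} ∈ K) :
    HomologyVanishes k K 0 := by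
  intro lo c hc _
  refine ⟨Finsupp.single {a} (c ∅), fun F hF => ?_, ?_⟩
  · obtain rfl := Finset.mem_singleton.mp (Finsupp.support_single_subset hF)
    exact ⟨ha, card_singleton a⟩
  · rw [bd_single_singleton, eq_comm, ← Finsupp.support_subset_singleton]
    exact fun F hF => Finset.mem_singleton.mpr (card_eq_zero.mp (hc F hF).2)

end Homology

section Core

lemma linkFace_empty (K : Set (Finset V)) : linkFace K ∅ = K := by
  ext G; simp [linkFace]

lemma mem_core_of_disjoint_isFacet {W : Type*} {K : Set (Finset W)} {F G : Finset W} (hF : F ∈ K)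
    (hG : IsFacet K G) (hFG : Disjoint F G) : F ∈ core K :=
  ⟨hF, fun _ hv => ⟨G, hG, disjoint_left.mp hFG hv⟩⟩

lemma core_univ : core (Set.univ : Set (Finset V)) = {∅} := by
  refine Set.eq_singleton_iff_unique_mem.mpr ⟨⟨trivial, by simp⟩, fun F hF => ?_⟩
  by_contra hne
  obtain ⟨v, hv⟩ := nonempty_iff_ne_empty.mpr hne
  obtain ⟨G, hG, hvG⟩ := hF.2 v hv
  exact hvG (hG.2 _ trivial (subset_insert v G) ▸ mem_insert_self v G)

lemma linkFace_zeroSphere_singleton {a c : V} (hac : a ≠ c) :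
    linkFace ({∅, {a}, {c}} : Set (Finset V)) {a} = {∅} := by
  ext G
  simp only [linkFace, Set.mem_insert_iff, Set.mem_singleton_iff, Set.mem_ofPred_eq]
  constructor
  · rintro ⟨hd, h | h | h⟩
    · simp at h
    · exact (disjoint_self_iff_empty G).mp (hd.mono_left (h ▸ subset_union_right))
    · exact absurd (h ▸ mem_union_left G (mem_singleton_self a)) (by simpa using hac)
  · rintro rfl
    simp

variable (k : Type*) [Field k]

lemma isGorensteinOver_univ : IsGorensteinOver k (Set.univ : Set (Finset V)) := by
  intro F hF
  rw [core_univ, Set.mem_singleton_iff] at hF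
  subst hF
  refine ⟨0, ?_, fun _ h => absurd h (Nat.not_lt_zero _)⟩
  rw [core_univ, linkFace_empty]
  exact topHomologyIsK_singleton_empty k

lemma isGorensteinOver_of_core_eq_zeroSphere {K : Set (Finset V)} {a c : V} (hac : a ≠ c)
    (hcore : core K = {∅, {a}, {c}}) : IsGorensteinOver k K := by
  rw [IsGorensteinOver, hcore]
  rintro F (rfl | rfl | rfl)
  · refine ⟨1, ?_, fun j hj => ?_⟩
    · rw [linkFace_empty]
      exact topHomologyIsK_zeroSphere k hac
    · obtain rfl : j = 0 := by omega
      rw [linkFace_empty]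
      exact homologyVanishes_zero k (a := a) (by simp)
  · refine ⟨0, ?_, fun _ h => absurd h (Nat.not_lt_zero _)⟩
    rw [linkFace_zeroSphere_singleton hac]
    exact topHomologyIsK_singleton_empty k
  · refine ⟨0, ?_, fun _ h => absurd h (Nat.not_lt_zero _)⟩
    rw [Set.pair_comm ({a} : Finset V), linkFace_zeroSphere_singleton hac.symm]
    exact topHomologyIsK_singleton_empty k

lemma not_isGorensteinOver_of_linkFace_core_eq_point {K : Set (Finset V)} {F : Finset V} {x : V}
    (hF : F ∈ core K) (hlink : linkFace (core K) F = {∅, {x}}) : ¬ IsGorensteinOver k K := by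
  intro hK
  obtain ⟨m, hm, -⟩ := hK F hF
  rw [hlink] at hm
  exact not_topHomologyIsK_point k x m hm

end Core

section CliqueComplex

variable {W : Type*} {G : SimpleGraph W}

lemma cliqueComplex_top : cliqueComplex (⊤ : SimpleGraph W) = Set.univ :=
  Set.eq_univ_of_forall fun _ _ _ _ _ hab => hab

lemma singleton_mem_cliqueComplex (a : W) : {a} ∈ cliqueComplex G := by
  simp [cliqueComplex]

lemma pair_mem_cliqueComplex [DecidableEq W] {a b : W} (h : G.Adj a b) :
    {a, b} ∈ cliqueComplex G := by
  simpa [cliqueComplex, isClique_pair] using fun _ => h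

lemma eq_empty_or_eq_singleton_of_subset_pair [DecidableEq W] {a c : W} (hac : ¬ G.Adj a c)
    {F : Finset W} (hF : F ∈ cliqueComplex G) (hsub : F ⊆ {a, c}) :
    F = ∅ ∨ F = {a} ∨ F = {c} := by
  rw [← coe_subset, coe_pair, Set.subset_pair_iff_eq] at hsub
  rcases hsub with h | h | h | h
  · exact Or.inl (coe_eq_empty.mp h)
  · exact Or.inr (Or.inl (coe_eq_singleton.mp h))
  · exact Or.inr (Or.inr (coe_eq_singleton.mp h))
  · obtain rfl : a = c := by
      by_contra hne
      exact hac ((isClique_pair.mp (h ▸ hF : G.IsClique {a, c})) hne)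
    exact Or.inr (Or.inl (by simpa using h))

lemma mem_of_isFacet_cliqueComplex [DecidableEq W] {v : W} (hv : ∀ w, w ≠ v → G.Adj v w)
    {F : Finset W} (hF : IsFacet (cliqueComplex G) F) : v ∈ F := by
  have hvF : insert v F ∈ cliqueComplex G := by
    rw [cliqueComplex, Set.mem_ofPred_eq, coe_insert, isClique_insert]
    exact ⟨hF.1, fun w _ hw => hv w hw.symm⟩
  exact hF.2 _ hvF (subset_insert v F) ▸ mem_insert_self v F

lemma notMem_core_cliqueComplex [DecidableEq W] {v : W} (hv : ∀ w, w ≠ v → G.Adj v w)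
    {F : Finset W} (hF : F ∈ core (cliqueComplex G)) : v ∉ F := fun hvF =>
  let ⟨_, hfacet, hvG⟩ := hF.2 v hvF
  hvG (mem_of_isFacet_cliqueComplex hv hfacet)

end CliqueComplex

section PathLineGraph

variable {n : ℕ}

def pathEdge (i : ℕ) (h : i < n) : (pathGraph (n + 1)).edgeSet :=
  ⟨s(⟨i, by omega⟩, ⟨i + 1, by omega⟩), by simp [pathGraph_adj]⟩

lemma exists_eq_pathEdge (e : (pathGraph (n + 1)).edgeSet) : ∃ i h, e = pathEdge i h := by
  obtain ⟨e, he⟩ := e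
  induction e using Sym2.ind with
  | _ u v =>
    rw [mem_edgeSet, pathGraph_adj] at he
    rcases he with h | h
    · exact ⟨u, by omega, by simp [pathEdge, Fin.ext_iff, ← h]⟩
    · exact ⟨v, by omega, by simp [pathEdge, Fin.ext_iff, ← h]⟩

lemma pathEdge_inj {i j : ℕ} (hi : i < n) (hj : j < n) : pathEdge i hi = pathEdge j hj ↔ i = j := by
  simp only [pathEdge, Subtype.ext_iff, Sym2.eq_iff, Fin.mk.injEq]
  omega

lemma lineGraph_adj_pathEdge {i j : ℕ} (hi : i < n) (hj : j < n) :
    (lineGraph (pathGraph (n + 1))).Adj (pathEdge i hi) (pathEdge j hj) ↔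
      i + 1 = j ∨ j + 1 = i := by
  rw [lineGraph_adj_iff_exists, ne_eq, pathEdge_inj]
  simp only [pathEdge, Sym2.mem_iff, Fin.ext_iff]
  constructor
  · rintro ⟨hne, v, hv1, hv2⟩
    omega
  · rintro (rfl | rfl)
    · exact ⟨by omega, ⟨i + 1, by omega⟩, by simp⟩
    · exact ⟨by omega, ⟨j + 1, by omega⟩, by simp⟩

lemma lineGraph_pathGraph_eq_top (hn : n ≤ 2) : lineGraph (pathGraph (n + 1)) = ⊤ := by
  ext e f
  obtain ⟨i, hi, rfl⟩ := exists_eq_pathEdge e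
  obtain ⟨j, hj, rfl⟩ := exists_eq_pathEdge f
  rw [top_adj, ne_eq, pathEdge_inj, lineGraph_adj_pathEdge]
  omega

lemma isFacet_pathEdge_pair {i : ℕ} (h : i + 1 < n) :
    IsFacet (cliqueComplex (lineGraph (pathGraph (n + 1))))
      {pathEdge i (Nat.lt_of_succ_lt h), pathEdge (i + 1) h} := by
  refine ⟨pair_mem_cliqueComplex ((lineGraph_adj_pathEdge _ _).mpr (Or.inl rfl)),
    fun F hF hsub => Subset.antisymm hsub fun x hx => ?_⟩
  obtain ⟨j, hj, rfl⟩ := exists_eq_pathEdge x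
  by_contra hx'
  simp only [mem_insert, mem_singleton, pathEdge_inj, not_or] at hx'
  have h₁ := hF (hsub (mem_insert_self _ _)) hx (by rw [ne_eq, pathEdge_inj]; omega)
  have h₂ := hF (hsub (mem_insert_of_mem (mem_singleton_self _))) hx
    (by rw [ne_eq, pathEdge_inj]; omega)
  rw [lineGraph_adj_pathEdge] at h₁ h₂
  omega

lemma core_cliqueComplex_lineGraph_pathGraph_four :
    core (cliqueComplex (lineGraph (pathGraph (3 + 1)))) =
      {∅, {pathEdge 0 (by norm_num)}, {pathEdge 2 (by norm_num)}} := by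
  have hfacet₀₁ := isFacet_pathEdge_pair (n := 3) (i := 0) (by norm_num)
  have hfacet₁₂ := isFacet_pathEdge_pair (n := 3) (i := 1) (by norm_num)
  set e₁ := pathEdge (n := 3) 1 (by norm_num)
  have hmid : ∀ w, w ≠ e₁ → (lineGraph (pathGraph (3 + 1))).Adj e₁ w := fun w hw => by
    obtain ⟨j, hj, rfl⟩ := exists_eq_pathEdge w
    rw [ne_eq, pathEdge_inj] at hw
    rw [lineGraph_adj_pathEdge]
    omega
  ext F
  constructor
  · intro hF
    refine eq_empty_or_eq_singleton_of_subset_pair (by rw [lineGraph_adj_pathEdge]; omega) hF.1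
      fun x hx => ?_
    obtain ⟨j, hj, rfl⟩ := exists_eq_pathEdge x
    have : j ≠ 1 := by
      rintro rfl
      exact notMem_core_cliqueComplex hmid hF hx
    simp only [mem_insert, mem_singleton, pathEdge_inj]
    omega
  · rintro (rfl | rfl | rfl)
    · exact mem_core_of_disjoint_isFacet (by simp [cliqueComplex]) hfacet₀₁ (disjoint_empty_left _)
    · exact mem_core_of_disjoint_isFacet (singleton_mem_cliqueComplex _) hfacet₁₂
        (by simp [e₁, pathEdge_inj])
    · exact mem_core_of_disjoint_isFacet (singleton_mem_cliqueComplex _) hfacet₀₁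
        (by simp [e₁, pathEdge_inj])

lemma mem_core_of_subset_pathEdge_zero_one (hn : 4 ≤ n) {F : Finset (pathGraph (n + 1)).edgeSet}
    (hsub : F ⊆ {pathEdge 0 (by omega), pathEdge 1 (by omega)})
    (hF : F ∈ cliqueComplex (lineGraph (pathGraph (n + 1)))) :
    F ∈ core (cliqueComplex (lineGraph (pathGraph (n + 1)))) :=
  mem_core_of_disjoint_isFacet hF (isFacet_pathEdge_pair (i := 2) (by omega))
    (disjoint_of_subset_left hsub (by simp [pathEdge_inj]))

lemma linkFace_core_singleton_pathEdge_zero (hn : 4 ≤ n) :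
    linkFace (core (cliqueComplex (lineGraph (pathGraph (n + 1))))) {pathEdge 0 (by omega)} =
      {∅, {pathEdge 1 (by omega)}} := by
  have hadj := (lineGraph_adj_pathEdge (n := n) (i := 0) (j := 1) (by omega) (by omega)).mpr
    (Or.inl rfl)
  ext G
  refine ⟨fun ⟨hd, hG⟩ => ?_, ?_⟩
  · have hsub : G ⊆ {pathEdge 1 (by omega)} := fun x hx => by
      obtain ⟨j, hj, rfl⟩ := exists_eq_pathEdge x
      have hne : pathEdge 0 (by omega) ≠ pathEdge j hj := fun h =>
        disjoint_left.mp hd (mem_singleton_self _) (h ▸ hx)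
      have := hG.1 (mem_union_left _ (mem_singleton_self _)) (mem_union_right _ hx) hne
      rw [lineGraph_adj_pathEdge] at this
      simp only [mem_singleton, pathEdge_inj]
      omega
    simpa using subset_singleton_iff.mp hsub
  · rintro (rfl | rfl)
    · simpa [linkFace] using
        mem_core_of_subset_pathEdge_zero_one hn (by simp) (singleton_mem_cliqueComplex _)
    · refine ⟨disjoint_singleton.mpr hadj.ne, ?_⟩
      rw [← insert_eq]
      exact mem_core_of_subset_pathEdge_zero_one hn subset_rfl (pair_mem_cliqueComplex hadj)

lemma not_isGorensteinOver_cliqueComplex_lineGraph_pathGraph (hn : 4 ≤ n) (k : Type*) [Field k] :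
    ¬ IsGorensteinOver k (cliqueComplex (lineGraph (pathGraph (n + 1)))) :=
  not_isGorensteinOver_of_linkFace_core_eq_point k
    (mem_core_of_subset_pathEdge_zero_one hn (by simp) (singleton_mem_cliqueComplex _))
    (linkFace_core_singleton_pathEdge_zero hn)

end PathLineGraph

theorem stmt19_general (n : ℕ) :
    (∀ (k : Type) [Field k],
        IsGorensteinOver k (cliqueComplex (SimpleGraph.lineGraph (pathGraph (n + 1))))) ↔
      n ≤ 3 := by
  refine ⟨fun h => ?_, fun hn k _ => ?_⟩
  · by_contra! hn
    exact not_isGorensteinOver_cliqueComplex_lineGraph_pathGraph hn ℚ (h ℚ)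
  · obtain hn | rfl : n ≤ 2 ∨ n = 3 := by omega
    · rw [lineGraph_pathGraph_eq_top hn, cliqueComplex_top]
      exact isGorensteinOver_univ k
    · exact isGorensteinOver_of_core_eq_zeroSphere k (by simp [pathEdge_inj])
        core_cliqueComplex_lineGraph_pathGraph_four

theorem stmt19 (n : ℕ) (hn : 1 ≤ n) :
    (∀ (k : Type) [Field k],
        IsGorensteinOver k (cliqueComplex (SimpleGraph.lineGraph (pathGraph (n + 1))))) ↔
      n ≤ 3 :=
  stmt19_general n
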